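/- arXiv:1205.1139 — 3 statements merged into one kernel-verified Lean document; each statement's English description precedes it below -/
import Mathlib

section
/- In ∧²F^× one has the identity (1-r)∧r = Σ cyclic terms: for four generic vectors x₀,…,x₃ in F² with cross-ratio r = (Δ(x₀,x₃)Δ(x₁,x₂))/(Δ(x₀,x₂)Δ(x₁,x₃)), the element (1-r)∧r equals Σ_{i=0}^{3}(-1)^i [Δ(x_a,x_b)∧Δ(x_a,x_c) - Δ(x_a,x_b)∧Δ(x_b,x_c) + Δ(x_a,x_c)∧Δ(x_b,x_c)] where for each i, {a,b,c} = {0,1,2,3}\{i} in increasing order. (Commutativity of the weight-2 square: f²₀ ∘ d = δ ∘ f²₁ on a single generator (x₀,x₁,x₂,x₃).) -/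
/-- The 2×2 determinant of the matrix with columns `u, v ∈ F²`. -/
def det2 {F : Type*} [Field F] (u v : Fin 2 → F) : F := u 0 * v 1 - u 1 * v 0

/-- The wedge `u ∧ v` of two units of `F`, viewed inside the exterior algebra (over `ℤ`)
of the multiplicative group `Fˣ` written additively; this represents elements of `∧²F^×`. -/
noncomputable def wedge2 {F : Type*} [Field F] (u v : Fˣ) :
    ExteriorAlgebra ℤ (Additive Fˣ) :=
  ExteriorAlgebra.ι ℤ (Additive.ofMul u) * ExteriorAlgebra.ι ℤ (Additive.ofMul v)

/-- `f²₀(a,b,c) = Δ(a,b)∧Δ(a,c) − Δ(a,b)∧Δ(b,c) + Δ(a,c)∧Δ(b,c) ∈ ∧²F^×`. -/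
noncomputable def f20 {F : Type*} [Field F] (a b c : Fin 2 → F)
    (hab : det2 a b ≠ 0) (hac : det2 a c ≠ 0) (hbc : det2 b c ≠ 0) :
    ExteriorAlgebra ℤ (Additive Fˣ) :=
  wedge2 (Units.mk0 _ hab) (Units.mk0 _ hac) - wedge2 (Units.mk0 _ hab) (Units.mk0 _ hbc) +
    wedge2 (Units.mk0 _ hac) (Units.mk0 _ hbc)

open ExteriorAlgebra in
lemma wedge_expand {M : Type*} [AddCommGroup M] [Module ℤ M] (a b c d e f : M) :
    ι ℤ (a + f + -(b + e)) * ι ℤ (c + d + -(b + e)) =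
      (ι ℤ d * ι ℤ e - ι ℤ d * ι ℤ f + ι ℤ e * ι ℤ f)
      - (ι ℤ b * ι ℤ c - ι ℤ b * ι ℤ f + ι ℤ c * ι ℤ f)
      + (ι ℤ a * ι ℤ c - ι ℤ a * ι ℤ e + ι ℤ c * ι ℤ e)
      - (ι ℤ a * ι ℤ b - ι ℤ a * ι ℤ d + ι ℤ b * ι ℤ d) := by
  have sq : ∀ m : M, ι ℤ m * ι ℤ m = 0 := fun m => ExteriorAlgebra.ι_sq_zero m
  have sw : ∀ m n : M, ι ℤ n * ι ℤ m = -(ι ℤ m * ι ℤ n) := fun m n =>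
    eq_neg_of_add_eq_zero_left (ExteriorAlgebra.ι_add_mul_swap n m)
  simp only [map_add, map_neg]
  simp only [mul_add, add_mul, mul_neg, neg_mul, neg_add, neg_neg, sq]
  rw [sw c f, sw d f, sw b f, sw e f, sw c e, sw d e, sw b e]
  abel

lemma main_aux {F : Type*} [Field F] (U V A B C D E G : Fˣ)
    (hU : U = A * G * (B * E)⁻¹) (hV : V = C * D * (B * E)⁻¹) :
    wedge2 U V = (wedge2 D E - wedge2 D G + wedge2 E G)
      - (wedge2 B C - wedge2 B G + wedge2 C G)
      + (wedge2 A C - wedge2 A E + wedge2 C E)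
      - (wedge2 A B - wedge2 A D + wedge2 B D) := by
  subst hU hV
  simp only [wedge2, ofMul_mul, ofMul_inv]
  exact wedge_expand (Additive.ofMul A) (Additive.ofMul B) (Additive.ofMul C)
    (Additive.ofMul D) (Additive.ofMul E) (Additive.ofMul G)

/-- Commutativity of the weight-2 square `f²₀ ∘ d = δ ∘ f²₁` on a generator: in `∧²F^×`,
`(1−r)∧r = Σᵢ (−1)ⁱ f²₀(x₀,…,x̂ᵢ,…,x₃)` where `r` is the cross-ratio of `x₀,…,x₃`. -/
theorem weight_two_square {F : Type*} [Field F] [CharZero F] (x : Fin 4 → Fin 2 → F)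
    (hgen : ∀ i j, i ≠ j → det2 (x i) (x j) ≠ 0) :
    wedge2
      (Units.mk0
        (1 - det2 (x 0) (x 3) * det2 (x 1) (x 2) / (det2 (x 0) (x 2) * det2 (x 1) (x 3)))
        (by
          have h01 := hgen 0 1 (by decide)
          have h02 := hgen 0 2 (by decide)
          have h13 := hgen 1 3 (by decide)
          have h23 := hgen 2 3 (by decide)
          have key : 1 - det2 (x 0) (x 3) * det2 (x 1) (x 2) /
              (det2 (x 0) (x 2) * det2 (x 1) (x 3)) =
              det2 (x 0) (x 1) * det2 (x 2) (x 3) / (det2 (x 0) (x 2) * det2 (x 1) (x 3)) := by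
            field_simp
            simp only [det2]
            ring
          rw [key]
          exact div_ne_zero (mul_ne_zero h01 h23) (mul_ne_zero h02 h13)))
      (Units.mk0
        (det2 (x 0) (x 3) * det2 (x 1) (x 2) / (det2 (x 0) (x 2) * det2 (x 1) (x 3)))
        (div_ne_zero (mul_ne_zero (hgen 0 3 (by decide)) (hgen 1 2 (by decide)))
          (mul_ne_zero (hgen 0 2 (by decide)) (hgen 1 3 (by decide))))) =
      f20 (x 1) (x 2) (x 3) (hgen 1 2 (by decide)) (hgen 1 3 (by decide)) (hgen 2 3 (by decide)) -
      f20 (x 0) (x 2) (x 3) (hgen 0 2 (by decide)) (hgen 0 3 (by decide)) (hgen 2 3 (by decide)) +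
      f20 (x 0) (x 1) (x 3) (hgen 0 1 (by decide)) (hgen 0 3 (by decide)) (hgen 1 3 (by decide)) -
      f20 (x 0) (x 1) (x 2) (hgen 0 1 (by decide)) (hgen 0 2 (by decide)) (hgen 1 2 (by decide)) := by
  have h01 := hgen 0 1 (by decide)
  have h02 := hgen 0 2 (by decide)
  have h03 := hgen 0 3 (by decide)
  have h12 := hgen 1 2 (by decide)
  have h13 := hgen 1 3 (by decide)
  have h23 := hgen 2 3 (by decide)
  simp only [f20]
  refine main_aux _ _ (Units.mk0 _ h01) (Units.mk0 _ h02) (Units.mk0 _ h03)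
    (Units.mk0 _ h12) (Units.mk0 _ h13) (Units.mk0 _ h23) ?_ ?_
  · apply Units.ext
    simp only [Units.val_mk0, Units.val_mul, Units.val_inv_eq_inv_val]
    field_simp
    simp only [det2]; ring
  · apply Units.ext
    simp only [Units.val_mk0, Units.val_mul, Units.val_inv_eq_inv_val]
    field_simp
end

section
/- The 3×3 determinant expansion identity underlying f³₀: for four vectors x₀,…,x₃ in F³ in generic position, the element f³₀(x₀,…,x₃) = Σ_{i=0}^{3} (-1)^i ∧_{j≠i} Δ(x₀,…,x̂ⱼ,…,x₃) ∈ ∧³F^× satisfies g¹_{3,D}(f³₀(x₀,…,x₃)) = Σ_{i=0}^{3} (-1)^i (D(Δᵢ)/Δᵢ) ⊗ (Δ_{i+1}/Δ_{i+2}) ∧ (Δ_{i+3}/Δ_{i+2}), where Δᵢ := Δ(x₀,…,x̂ᵢ,…,x₃) and indices are mod 4. -/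
open scoped TensorProduct

/-- The 3×3 determinant of the matrix with columns `u, v, w ∈ F³`. -/
def det3 {F : Type*} [Field F] (u v w : Fin 3 → F) : F :=
  u 0 * (v 1 * w 2 - v 2 * w 1) - u 1 * (v 0 * w 2 - v 2 * w 0) + u 2 * (v 0 * w 1 - v 1 * w 0)

/-- The wedge `u ∧ v ∈ ∧²F^×`. -/
noncomputable def wedgeSq {F : Type*} [Field F] (u v : Fˣ) : ⋀[ℤ]^2 (Additive Fˣ) :=
  ⟨ExteriorAlgebra.ιMulti ℤ 2 ![Additive.ofMul u, Additive.ofMul v],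
    ExteriorAlgebra.ιMulti_range ℤ 2 (Set.mem_range_self _)⟩

/-- `g¹_{3,D}(x,y,z) = (Dx/x) ⊗ y∧z − (Dy/y) ⊗ x∧z + (Dz/z) ⊗ x∧y ∈ F ⊗ ∧²F^×`. -/
noncomputable def g13 {F : Type*} [Field F] (D : F → F) (x y z : Fˣ) :
    TensorProduct ℤ F (⋀[ℤ]^2 (Additive Fˣ)) :=
  (D x / x) ⊗ₜ[ℤ] wedgeSq y z - (D y / y) ⊗ₜ[ℤ] wedgeSq x z + (D z / z) ⊗ₜ[ℤ] wedgeSq x y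

lemma wedgeSq_coe {F : Type*} [Field F] (a b : Fˣ) :
    (wedgeSq a b : ExteriorAlgebra ℤ (Additive Fˣ)) =
      ExteriorAlgebra.ι ℤ (Additive.ofMul a) * ExteriorAlgebra.ι ℤ (Additive.ofMul b) := by
  simp [wedgeSq, ExteriorAlgebra.ιMulti_apply, List.ofFn_succ]

lemma wedgeSq_div {F : Type*} [Field F] (a b c : Fˣ) :
    wedgeSq (a / b) (c / b) = wedgeSq a c - wedgeSq a b - wedgeSq b c := by
  apply Subtype.ext
  push_cast [wedgeSq_coe]
  have h : Additive.ofMul (a / b) = Additive.ofMul a - Additive.ofMul b := rfl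
  have h' : Additive.ofMul (c / b) = Additive.ofMul c - Additive.ofMul b := rfl
  rw [h, h', map_sub, map_sub, mul_sub, sub_mul, sub_mul,
    ExteriorAlgebra.ι_sq_zero]
  abel

lemma wedgeSq_swap {F : Type*} [Field F] (a b : Fˣ) : wedgeSq a b = -wedgeSq b a := by
  apply Subtype.ext
  push_cast [wedgeSq_coe]
  rw [eq_neg_iff_add_eq_zero, ExteriorAlgebra.ι_add_mul_swap]

set_option maxHeartbeats 4000000 in
set_option synthInstance.maxHeartbeats 1000000 in
/-- For four generic vectors of `F³`, `g¹_{3,D}(f³₀(x₀,…,x₃)) = τ³₀(x₀,…,x₃)`: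
`g¹_{3,D}(Σᵢ (−1)ⁱ ⋀_{j≠i} Δⱼ) = Σᵢ (−1)ⁱ (DΔᵢ/Δᵢ) ⊗ (Δ_{i+1}/Δ_{i+2}) ∧ (Δ_{i+3}/Δ_{i+2})`
with `Δᵢ = Δ(x₀,…,x̂ᵢ,…,x₃)` and indices mod 4. -/
theorem g13_f30_eq_tau30 {F : Type*} [Field F] [CharZero F] (D : F → F)
    (hadd : ∀ a b : F, D (a + b) = D a + D b)
    (hmul : ∀ a b : F, D (a * b) = a * D b + b * D a)
    (x : Fin 4 → Fin 3 → F)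
    (h0 : det3 (x 1) (x 2) (x 3) ≠ 0) (h1 : det3 (x 0) (x 2) (x 3) ≠ 0)
    (h2 : det3 (x 0) (x 1) (x 3) ≠ 0) (h3 : det3 (x 0) (x 1) (x 2) ≠ 0) :
    g13 D (Units.mk0 _ h1) (Units.mk0 _ h2) (Units.mk0 _ h3) -
      g13 D (Units.mk0 _ h0) (Units.mk0 _ h2) (Units.mk0 _ h3) +
      g13 D (Units.mk0 _ h0) (Units.mk0 _ h1) (Units.mk0 _ h3) -
      g13 D (Units.mk0 _ h0) (Units.mk0 _ h1) (Units.mk0 _ h2) =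
    (D (det3 (x 1) (x 2) (x 3)) / det3 (x 1) (x 2) (x 3)) ⊗ₜ[ℤ]
        wedgeSq (Units.mk0 _ h1 / Units.mk0 _ h2) (Units.mk0 _ h3 / Units.mk0 _ h2) -
      (D (det3 (x 0) (x 2) (x 3)) / det3 (x 0) (x 2) (x 3)) ⊗ₜ[ℤ]
        wedgeSq (Units.mk0 _ h2 / Units.mk0 _ h3) (Units.mk0 _ h0 / Units.mk0 _ h3) +
      (D (det3 (x 0) (x 1) (x 3)) / det3 (x 0) (x 1) (x 3)) ⊗ₜ[ℤ]
        wedgeSq (Units.mk0 _ h3 / Units.mk0 _ h0) (Units.mk0 _ h1 / Units.mk0 _ h0) -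
      (D (det3 (x 0) (x 1) (x 2)) / det3 (x 0) (x 1) (x 2)) ⊗ₜ[ℤ]
        wedgeSq (Units.mk0 _ h0 / Units.mk0 _ h1) (Units.mk0 _ h2 / Units.mk0 _ h1) := by
  rw [wedgeSq_div, wedgeSq_div, wedgeSq_div, wedgeSq_div]
  rw [wedgeSq_swap (Units.mk0 _ h2) (Units.mk0 _ h0),
    wedgeSq_swap (Units.mk0 _ h3) (Units.mk0 _ h0),
    wedgeSq_swap (Units.mk0 _ h3) (Units.mk0 _ h1)]
  simp only [g13, TensorProduct.tmul_sub, TensorProduct.tmul_neg, Units.val_mk0]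
  abel
end

section
/- The five-term identity for the infinitesimal weight-2 boundary: for a, b ∈ F \ {0,1} with a ≠ b and all five cross-ratio arguments in F \ {0,1}, one has ∂^D(⟦a⟧) − ∂^D(⟦b⟧) + ∂^D(⟦b/a⟧) − ∂^D(⟦(1−b)/(1−a)⟧) + ∂^D(⟦(1−b⁻¹)/(1−a⁻¹)⟧) = 0 in F ⊗ F^×, where ∂^D(⟦x⟧) = −Dlog(1−x) ⊗ x + Dlog(x) ⊗ (1−x). -/
/-!
`∂^D(⟦x⟧)` is the image of `x ∧ (1 - x)` under the antisymmetrisation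
`u ∧ v ↦ Dlog u ⊗ v - Dlog v ⊗ u`, and `Dlog : F^× → F` is a homomorphism by the Leibniz rule.
The five arguments and their complements are `±` products of the units `a, b, 1 - a, 1 - b, a - b`,
so the five-term sum becomes an identity valid for `f u ⊗ v - f v ⊗ u` with any additive `f` and
any five elements of an abelian group.
The signs drop out because `F` is uniquely divisible: `Dlog (-1) = 0` and `F ⊗ ⟨-1⟩ = 0`.
-/

open scoped TensorProduct

/-- The infinitesimal weight-2 boundary
`∂^D(⟦x⟧) = −Dlog(1−x) ⊗ x + Dlog(x) ⊗ (1−x) ∈ F ⊗ F^×`, defined for `x ≠ 0, 1`. -/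
noncomputable def boundaryTerm {F : Type*} [Field F] (D : F → F)
    (x : F) (hx0 : x ≠ 0) (hx1 : x ≠ 1) :
    TensorProduct ℤ F (Additive Fˣ) :=
  (-(D (1 - x) / (1 - x))) ⊗ₜ[ℤ] Additive.ofMul (Units.mk0 x hx0) +
    (D x / x) ⊗ₜ[ℤ]
      Additive.ofMul (Units.mk0 (1 - x) (sub_ne_zero_of_ne (Ne.symm hx1)))

section AntisymmTmul

variable {M P : Type*} [AddCommGroup M] [AddCommGroup P]

def antisymmTmul (f : M →+ P) (u v : M) : P ⊗[ℤ] M :=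
  f u ⊗ₜ v - f v ⊗ₜ u

theorem antisymmTmul_add_right_of_map_eq_zero (f : M →+ P) {t : M} (ht : f t = 0)
    (htmul : ∀ p : P, p ⊗ₜ[ℤ] t = 0) (u v : M) :
    antisymmTmul f u (t + v) = antisymmTmul f u v := by
  simp only [antisymmTmul, map_add, ht, zero_add, TensorProduct.tmul_add, htmul]

theorem antisymmTmul_five_term (f : M →+ P) (x y x' y' s : M) :
    antisymmTmul f x x' - antisymmTmul f y y' + antisymmTmul f (y - x) (s - x) -
        antisymmTmul f (y' - x') (s - x') +
      antisymmTmul f (y' + x - (x' + y)) (s - (x' + y)) = 0 := by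
  simp only [antisymmTmul, map_add, map_sub, TensorProduct.tmul_add, TensorProduct.tmul_sub,
    TensorProduct.add_tmul, TensorProduct.sub_tmul]
  abel

end AntisymmTmul

section Dlog

variable {F : Type*} [Field F] (D : F → F) (hmul : ∀ a b : F, D (a * b) = a * D b + b * D a)

def dlog : Additive Fˣ →+ F where
  toFun u := D (u.toMul : F) / u.toMul
  map_zero' := by
    have h := hmul 1 1
    simp only [mul_one, one_mul] at h
    have h1 : D 1 = 0 := by linear_combination -h
    simp [h1]
  map_add' u v := by
    simp only [toMul_add, Units.val_mul, hmul]
    field_simp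
    ring

theorem dlog_ofMul (u : Fˣ) : dlog D hmul (Additive.ofMul u) = D u / u := rfl

theorem dlog_ofMul_neg_one [CharZero F] : dlog D hmul (Additive.ofMul (-1)) = 0 := by
  have h : (2 : ℤ) • dlog D hmul (Additive.ofMul (-1)) = 0 := by
    rw [← map_zsmul, ← ofMul_zpow]
    simp
  simpa using h

theorem tmul_ofMul_neg_one [CharZero F] (p : F) : p ⊗ₜ[ℤ] Additive.ofMul (-1 : Fˣ) = 0 := by
  calc p ⊗ₜ[ℤ] Additive.ofMul (-1 : Fˣ)
      = (p / 2 + p / 2) ⊗ₜ[ℤ] Additive.ofMul (-1 : Fˣ) := by rw [add_halves]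
    _ = (p / 2) ⊗ₜ[ℤ] Additive.ofMul (-1 * -1 : Fˣ) := by
        rw [ofMul_mul, TensorProduct.add_tmul, TensorProduct.tmul_add]
    _ = 0 := by simp

theorem antisymmTmul_dlog_ofMul_neg_one_add [CharZero F] (u v : Additive Fˣ) :
    antisymmTmul (dlog D hmul) u (Additive.ofMul (-1) + v) = antisymmTmul (dlog D hmul) u v :=
  antisymmTmul_add_right_of_map_eq_zero _ (dlog_ofMul_neg_one D hmul) tmul_ofMul_neg_one u v

theorem boundaryTerm_eq_antisymmTmul {x : F} (hx0 : x ≠ 0) (hx1 : x ≠ 1) {u v : Fˣ}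
    (hu : (u : F) = x) (hv : (v : F) = 1 - x) :
    boundaryTerm D x hx0 hx1 =
      antisymmTmul (dlog D hmul) (Additive.ofMul u) (Additive.ofMul v) := by
  obtain rfl : u = Units.mk0 x hx0 := Units.ext hu
  obtain rfl : v = Units.mk0 (1 - x) (sub_ne_zero_of_ne (Ne.symm hx1)) := Units.ext hv
  simp only [boundaryTerm, antisymmTmul, dlog_ofMul, Units.val_mk0, TensorProduct.neg_tmul]
  abel

end Dlog

theorem five_term_boundary_general {F : Type*} [Field F] [CharZero F] (D : F → F)
    (hmul : ∀ a b : F, D (a * b) = a * D b + b * D a)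
    (a b : F) (ha0 : a ≠ 0) (ha1 : a ≠ 1) (hb0 : b ≠ 0) (hb1 : b ≠ 1) (hab : a ≠ b)
    (hc0 : b / a ≠ 0) (hc1 : b / a ≠ 1)
    (hd0 : (1 - b) / (1 - a) ≠ 0) (hd1 : (1 - b) / (1 - a) ≠ 1)
    (he0 : (1 - b⁻¹) / (1 - a⁻¹) ≠ 0) (he1 : (1 - b⁻¹) / (1 - a⁻¹) ≠ 1) :
    boundaryTerm D a ha0 ha1 - boundaryTerm D b hb0 hb1 +
      boundaryTerm D (b / a) hc0 hc1 -
      boundaryTerm D ((1 - b) / (1 - a)) hd0 hd1 +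
      boundaryTerm D ((1 - b⁻¹) / (1 - a⁻¹)) he0 he1 = 0 := by
  have ha1' : 1 - a ≠ 0 := sub_ne_zero.mpr (Ne.symm ha1)
  have hb1' : 1 - b ≠ 0 := sub_ne_zero.mpr (Ne.symm hb1)
  set A := Units.mk0 a ha0
  set B := Units.mk0 b hb0
  set A' := Units.mk0 (1 - a) ha1'
  set B' := Units.mk0 (1 - b) hb1'
  set S := Units.mk0 (a - b) (sub_ne_zero.mpr hab)
  rw [boundaryTerm_eq_antisymmTmul D hmul ha0 ha1 (u := A) (v := A') rfl rfl,
    boundaryTerm_eq_antisymmTmul D hmul hb0 hb1 (u := B) (v := B') rfl rfl,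
    boundaryTerm_eq_antisymmTmul D hmul hc0 hc1 (u := B / A) (v := S / A)
      (by simp [A, B]) (by simp [A, S]; field_simp),
    boundaryTerm_eq_antisymmTmul D hmul hd0 hd1 (u := B' / A') (v := -1 * (S / A'))
      (by simp [A', B']) (by simp [A', S]; field_simp; ring),
    boundaryTerm_eq_antisymmTmul D hmul he0 he1 (u := B' * A / (A' * B))
      (v := -1 * (S / (A' * B))) (by simp [A, B, A', B']; field_simp; ring)
      (by simp [B, A', S]; field_simp; ring)]
  simp only [ofMul_mul, ofMul_div, antisymmTmul_dlog_ofMul_neg_one_add]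
  exact antisymmTmul_five_term _ _ _ _ _ _

/-- The five-term identity for the infinitesimal weight-2 boundary:
`∂^D(⟦a⟧) − ∂^D(⟦b⟧) + ∂^D(⟦b/a⟧) − ∂^D(⟦(1−b)/(1−a)⟧) + ∂^D(⟦(1−b⁻¹)/(1−a⁻¹)⟧) = 0`
in `F ⊗ F^×`, i.e. the five-term relation generating `ρ₂^D(F)` lies in the kernel of
`∂^D`. -/
theorem five_term_boundary {F : Type*} [Field F] [CharZero F] (D : F → F)
    (hadd : ∀ a b : F, D (a + b) = D a + D b)
    (hmul : ∀ a b : F, D (a * b) = a * D b + b * D a)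
    (a b : F) (ha0 : a ≠ 0) (ha1 : a ≠ 1) (hb0 : b ≠ 0) (hb1 : b ≠ 1) (hab : a ≠ b)
    (hc0 : b / a ≠ 0) (hc1 : b / a ≠ 1)
    (hd0 : (1 - b) / (1 - a) ≠ 0) (hd1 : (1 - b) / (1 - a) ≠ 1)
    (he0 : (1 - b⁻¹) / (1 - a⁻¹) ≠ 0) (he1 : (1 - b⁻¹) / (1 - a⁻¹) ≠ 1) :
    boundaryTerm D a ha0 ha1 - boundaryTerm D b hb0 hb1 +
      boundaryTerm D (b / a) hc0 hc1 -
      boundaryTerm D ((1 - b) / (1 - a)) hd0 hd1 +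
      boundaryTerm D ((1 - b⁻¹) / (1 - a⁻¹)) he0 he1 = 0 :=
  five_term_boundary_general D hmul a b ha0 ha1 hb0 hb1 hab hc0 hc1 hd0 hd1 he0 he1
end
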